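/- The Hausdorff content H^α_μ is upper semicontinuous from below: for any increasing sequence of sets E_1 ⊂ E_2 ⊂ ⋯ ⊂ K with union E, one has H^α_μ(E) = lim_{j→∞} H^α_μ(E_j). -/

import Mathlib

open MeasureTheory Set Filter
open scoped ENNReal NNReal Topology

noncomputable section

abbrev Pt (d : ℕ) := EuclideanSpace ℝ (Fin d)

/-- An iterated function system of contractive similitudes on ℝ^d with attractor `K`
satisfying the strong separation condition. -/
structure IFS (d m : ℕ) where
  S : Fin m → Pt d → Pt d
  r : Fin m → ℝ
  r_pos : ∀ i, 0 < r i
  r_lt_one : ∀ i, r i < 1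
  similitude : ∀ i x y, dist (S i x) (S i y) = r i * dist x y
  K : Set (Pt d)
  K_nonempty : K.Nonempty
  K_compact : IsCompact K
  K_invariant : K = ⋃ i, S i '' K
  ssc : Pairwise fun i j => Disjoint (S i '' K) (S j '' K)

namespace IFS

variable {d m : ℕ}

/-- The composition `S_{i₁} ∘ ⋯ ∘ S_{iₙ}` for the word `w = i₁ ⋯ iₙ`. -/
def cylMap (Φ : IFS d m) (w : List (Fin m)) : Pt d → Pt d :=
  w.foldr (fun i g => Φ.S i ∘ g) id

/-- The basic cube (cylinder set) `K_w = S_{i₁} ∘ ⋯ ∘ S_{iₙ}(K)`. -/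
def cyl (Φ : IFS d m) (w : List (Fin m)) : Set (Pt d) :=
  Φ.cylMap w '' Φ.K

/-- `μ` is the self-similar probability measure associated with the probability
vector `p` (with all `p i > 0`), i.e. `μ = ∑ i, p i • μ ∘ S i ⁻¹`, supported on `K`. -/
def SelfSimilar (Φ : IFS d m) (p : Fin m → ℝ≥0∞) (μ : Measure (Pt d)) : Prop :=
  (∑ i, p i = 1) ∧ (∀ i, 0 < p i) ∧ IsProbabilityMeasure μ ∧ μ Φ.K = 1 ∧
    μ = ∑ i, p i • μ.map (Φ.S i)

/-- The α-dimensional Hausdorff content on `K` associated with `μ`, defined via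
coverings by countable families of basic cubes; `s` is the Hausdorff dimension of `K`. -/
def hContent (Φ : IFS d m) (μ : Measure (Pt d)) (s α : ℝ) (E : Set (Pt d)) : ℝ≥0∞ :=
  ⨅ (C : Set (List (Fin m))) (_ : C.Countable) (_ : E ⊆ ⋃ w ∈ C, Φ.cyl w),
    ∑' w : C, μ (Φ.cyl w.1) ^ (α / s)

/-- The dyadic-type Hardy–Littlewood maximal operator over basic cubes containing `x`. -/
def maxOp (Φ : IFS d m) (μ : Measure (Pt d)) (f : Pt d → ℝ) (x : Pt d) : ℝ≥0∞ :=
  ⨆ (w : List (Fin m)) (_ : x ∈ Φ.cyl w),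
    (μ (Φ.cyl w))⁻¹ * ∫⁻ y in Φ.cyl w, ENNReal.ofReal |f y| ∂μ

end IFS

/-- The Choquet integral of `g` over `E` with respect to the monotone set function `ν`. -/
def choquetInt {X : Type*} (ν : Set X → ℝ≥0∞) (E : Set X) (g : X → ℝ≥0∞) : ℝ≥0∞ :=
  ∫⁻ t in Set.Ioi (0 : ℝ), ν {x ∈ E | ENNReal.ofReal t < g x}

/-- `log⁺ t = max (0, log t)`. -/
def posLog (t : ℝ) : ℝ := max 0 (Real.log t)

/-!
Basic cubes are indexed by finite words, and by the strong separation condition two cubes are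
either nested (one word is a prefix of the other) or disjoint. Since `α / s ≤ 1`, the map
`t ↦ t ^ (α / s)` is countably subadditive, so replacing the cubes of a cover that lie inside a
cube `Q` by `Q` itself never increases the cost. Merging two covers along the prefix order makes
`H^α_μ` strongly subadditive, and an ultrafilter limit of coarsened covers shows that the content
of a union of cubes is the supremum of the contents of its finite subunions.

Given covers `C_j` of `E_j` whose costs exceed `H^α_μ(E_j)` by errors `δ_j` with `∑ δ_j < ε`,
strong subadditivity bounds the content of the union of the cubes of `C_0, …, C_J` by
`H^α_μ(E_J) + ε`, and every finite subfamily of `⋃ C_j` already lies in some `C_0 ∪ ⋯ ∪ C_J`.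
-/

theorem ENNReal.rpow_tsum_le_tsum_rpow {ι : Type*} (f : ι → ℝ≥0∞) {p : ℝ} (hp0 : 0 < p)
    (hp1 : p ≤ 1) : (∑' i, f i) ^ p ≤ ∑' i, f i ^ p := by
  rw [← ENNReal.le_rpow_inv_iff hp0, ENNReal.tsum_eq_iSup_sum (f := f)]
  refine iSup_le fun t => (ENNReal.le_rpow_inv_iff hp0).2 ?_
  calc (∑ i ∈ t, f i) ^ p ≤ ∑ i ∈ t, f i ^ p :=
        Finset.le_sum_of_subadditive (· ^ p) (ENNReal.zero_rpow_of_pos hp0).le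
          (fun a b => ENNReal.rpow_add_le_add_rpow a b hp0.le hp1) t f
    _ ≤ ∑' i, f i ^ p := ENNReal.sum_le_tsum t

theorem tsum_setOf_eventually_mem_le {ι α : Type*} {l : Filter ι} [l.NeBot] (f : α → ℝ≥0∞)
    {C : ι → Set α} {c : ℝ≥0∞} (hC : ∀ i, ∑' a : C i, f a ≤ c) :
    ∑' a : {a | ∀ᶠ i in l, a ∈ C i}, f a ≤ c := by
  rw [tsum_subtype, ENNReal.tsum_eq_iSup_sum]
  refine iSup_le fun t => ?_
  have hle : ∀ a, ∀ᶠ i in l, {a | ∀ᶠ i in l, a ∈ C i}.indicator f a ≤ (C i).indicator f a := by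
    intro a
    by_cases ha : ∀ᶠ i in l, a ∈ C i
    · filter_upwards [ha] with i hi
      rw [indicator_of_mem (show a ∈ {a | ∀ᶠ i in l, a ∈ C i} from ha), indicator_of_mem hi]
    · exact Eventually.of_forall fun i => by
        rw [indicator_of_notMem (show a ∉ {a | ∀ᶠ i in l, a ∈ C i} from ha)]
        exact zero_le
  obtain ⟨i, hi⟩ := ((eventually_all_finset t).2 fun a _ => hle a).exists
  calc ∑ a ∈ t, {a | ∀ᶠ i in l, a ∈ C i}.indicator f a ≤ ∑ a ∈ t, (C i).indicator f a :=
        Finset.sum_le_sum hi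
    _ ≤ ∑' a, (C i).indicator f a := ENNReal.sum_le_tsum t
    _ = ∑' a : C i, f a := (tsum_subtype _ _).symm
    _ ≤ c := hC i

theorem tsum_add_tsum_le_of_subset_union {α : Type*} (f : α → ℝ≥0∞) {S T U : Set α}
    (hU : U ⊆ S ∪ T) :
    ∑' a : U, f a + ∑' a : ↥((S ∪ T) \ U ∪ S ∩ T), f a ≤ ∑' a : S, f a + ∑' a : T, f a := by
  classical
  simp only [tsum_subtype _ f, ← ENNReal.tsum_add]
  refine ENNReal.tsum_le_tsum fun a => ?_
  have := @hU a
  simp only [indicator_apply, mem_union, Set.mem_sdiff, mem_inter_iff]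
  split_ifs <;> simp_all

theorem List.exists_prefix_minimal {α : Type*} {C : Set (List α)} {u : List α} (hu : u ∈ C) :
    ∃ v ∈ C, v <+: u ∧ ∀ w ∈ C, w <+: v → w = v := by
  induction h : u.length using Nat.strong_induction_on generalizing u with
  | _ n ih =>
    by_cases hmin : ∀ w ∈ C, w <+: u → w = u
    · exact ⟨u, hu, List.prefix_refl u, hmin⟩
    push Not at hmin
    obtain ⟨w, hwC, hwu, hne⟩ := hmin
    have hlt : w.length < n := h ▸ hwu.length_le.lt_of_ne (mt hwu.eq_of_length hne)
    obtain ⟨v, hvC, hvw, hv⟩ := ih w.length hlt hwC rfl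
    exact ⟨v, hvC, hvw.trans hwu, hv⟩

def prefixExtensions {α : Type*} (C : Set (List α)) : Set (List α) :=
  {w | ∃ u ∈ C, u <+: w}

section prefixExtensions

variable {α : Type*} {C C' : Set (List α)}

theorem subset_prefixExtensions : C ⊆ prefixExtensions C :=
  fun u hu => ⟨u, hu, List.prefix_refl u⟩

theorem prefixExtensions_subset_prefixExtensions (h : C ⊆ prefixExtensions C') :
    prefixExtensions C ⊆ prefixExtensions C' := by
  rintro w ⟨u, hu, huw⟩
  obtain ⟨u', hu', hu'u⟩ := h hu
  exact ⟨u', hu', hu'u.trans huw⟩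

theorem Ultrafilter.mem_prefixExtensions_setOf_eventually {ι : Type*} (𝒰 : Ultrafilter ι)
    {Cs : ι → Set (List α)} {w : List α} (hw : ∀ᶠ i in 𝒰, w ∈ prefixExtensions (Cs i)) :
    w ∈ prefixExtensions {u | ∀ᶠ i in 𝒰, u ∈ Cs i} := by
  have hfin : {u | u <+: w}.Finite :=
    w.inits.finite_toSet.subset fun u hu => (List.mem_inits u w).2 hu
  obtain ⟨u, huw, hu⟩ := (𝒰.eventually_exists_mem_iff hfin).1 <| hw.mono fun i ⟨u, hu, huw⟩ =>
    ⟨u, huw, hu⟩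
  exact ⟨u, hu, huw⟩

end prefixExtensions

theorem apply_accumulate_le_add_sum {X : Type*} {ν : Set X → ℝ≥0∞} (hν : Monotone ν)
    (hsub : ∀ A B, ν (A ∪ B) + ν (A ∩ B) ≤ ν A + ν B) {E V : ℕ → Set X} (hE : Monotone E)
    (hEV : ∀ j, E j ⊆ V j) (hfin : ∀ j, ν (E j) ≠ ⊤) {δ : ℕ → ℝ≥0∞}
    (hV : ∀ j, ν (V j) ≤ ν (E j) + δ j) (n : ℕ) :
    ν (accumulate V n) ≤ ν (E n) + ∑ i ∈ Finset.range (n + 1), δ i := by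
  induction n with
  | zero => simpa using hV 0
  | succ n ih =>
    refine (ENNReal.add_le_add_iff_right (hfin n)).1 ?_
    have hEn : E n ⊆ accumulate V n ∩ V (n + 1) :=
      subset_inter ((hEV n).trans subset_accumulate) ((hE n.le_succ).trans (hEV _))
    calc ν (accumulate V (n + 1)) + ν (E n)
        ≤ ν (accumulate V n ∪ V (n + 1)) + ν (accumulate V n ∩ V (n + 1)) := by
          rw [accumulate_succ]
          gcongr
          exact hν hEn
      _ ≤ ν (accumulate V n) + ν (V (n + 1)) := hsub _ _
      _ ≤ (ν (E n) + ∑ i ∈ Finset.range (n + 1), δ i) + (ν (E (n + 1)) + δ (n + 1)) :=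
          add_le_add ih (hV _)
      _ = (ν (E (n + 1)) + ∑ i ∈ Finset.range (n + 2), δ i) + ν (E n) := by
          rw [Finset.sum_range_succ _ (n + 1)]
          ring

namespace IFS

variable {d m : ℕ} (Φ : IFS d m)

theorem injective_S (i : Fin m) : Function.Injective (Φ.S i) := fun x y h => by
  have := Φ.similitude i x y
  rw [h, dist_self, eq_comm, mul_eq_zero] at this
  exact dist_eq_zero.1 (this.resolve_left (Φ.r_pos i).ne')

@[simp]
theorem cyl_nil : Φ.cyl [] = Φ.K := by
  simp [cyl, cylMap]

theorem cyl_cons (i : Fin m) (w : List (Fin m)) : Φ.cyl (i :: w) = Φ.S i '' Φ.cyl w := by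
  simp only [cyl, cylMap, List.foldr_cons, image_comp]

theorem cyl_subset_K (w : List (Fin m)) : Φ.cyl w ⊆ Φ.K := by
  induction w with
  | nil => simp
  | cons i w ih =>
    rw [cyl_cons]
    exact (image_mono ih).trans ((subset_iUnion (fun j => Φ.S j '' Φ.K) i).trans Φ.K_invariant.ge)

theorem cyl_subset_cyl_of_prefix {u w : List (Fin m)} (h : u <+: w) : Φ.cyl w ⊆ Φ.cyl u := by
  obtain ⟨t, rfl⟩ := h
  induction u with
  | nil => simpa using Φ.cyl_subset_K t
  | cons i u ih =>
    rw [List.cons_append, cyl_cons, cyl_cons]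
    exact image_mono ih

theorem prefix_or_prefix_of_mem_cyl {u w : List (Fin m)} {x : Pt d} (hu : x ∈ Φ.cyl u)
    (hw : x ∈ Φ.cyl w) : u <+: w ∨ w <+: u := by
  induction u generalizing w x with
  | nil => exact Or.inl List.nil_prefix
  | cons i u ih =>
    cases w with
    | nil => exact Or.inr List.nil_prefix
    | cons j w =>
      rw [cyl_cons] at hu hw
      obtain ⟨y, hy, rfl⟩ := hu
      obtain ⟨z, hz, hzy⟩ := hw
      obtain rfl : i = j := by
        by_contra hij
        exact disjoint_left.1 (Φ.ssc hij) (mem_image_of_mem _ (Φ.cyl_subset_K u hy))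
          (hzy ▸ mem_image_of_mem _ (Φ.cyl_subset_K w hz))
      obtain rfl : z = y := Φ.injective_S i hzy
      simpa only [List.cons_prefix_cons, true_and] using ih hy hz

theorem biUnion_cyl_prefixExtensions (C : Set (List (Fin m))) :
    ⋃ w ∈ prefixExtensions C, Φ.cyl w = ⋃ w ∈ C, Φ.cyl w := by
  refine (biUnion_subset_biUnion_left subset_prefixExtensions).antisymm' ?_
  refine iUnion₂_subset fun w ⟨u, hu, huw⟩ => ?_
  exact (Φ.cyl_subset_cyl_of_prefix huw).trans (subset_biUnion_of_mem hu)

variable {Φ} {μ : Measure (Pt d)} {s α : ℝ}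

theorem hContent_eq_iInf (E : Set (Pt d)) :
    Φ.hContent μ s α E = ⨅ (C : Set (List (Fin m))) (_ : E ⊆ ⋃ w ∈ C, Φ.cyl w),
      ∑' w : C, μ (Φ.cyl w) ^ (α / s) :=
  iInf_congr fun C => iInf_pos C.to_countable

theorem hContent_le_tsum {E : Set (Pt d)} {C : Set (List (Fin m))}
    (hE : E ⊆ ⋃ w ∈ C, Φ.cyl w) : Φ.hContent μ s α E ≤ ∑' w : C, μ (Φ.cyl w) ^ (α / s) :=
  (hContent_eq_iInf E).trans_le (iInf₂_le C hE)

theorem exists_cover_tsum_lt {E : Set (Pt d)} {c : ℝ≥0∞} (h : Φ.hContent μ s α E < c) :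
    ∃ C : Set (List (Fin m)), E ⊆ ⋃ w ∈ C, Φ.cyl w ∧ ∑' w : C, μ (Φ.cyl w) ^ (α / s) < c := by
  rw [hContent_eq_iInf] at h
  simpa only [iInf_lt_iff, exists_prop] using h

theorem hContent_mono : Monotone (Φ.hContent μ s α) := fun E F hEF => by
  simp only [hContent_eq_iInf]
  exact le_iInf₂ fun C hC => iInf₂_le C (hEF.trans hC)

theorem hContent_lt_top [IsFiniteMeasure μ] (hθ : 0 ≤ α / s) {E : Set (Pt d)} (hE : E ⊆ Φ.K) :
    Φ.hContent μ s α E < ⊤ := by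
  refine (hContent_le_tsum (C := {[]}) (by simpa using hE)).trans_lt ?_
  rw [tsum_singleton ([] : List (Fin m)) fun w => μ (Φ.cyl w) ^ (α / s)]
  exact ENNReal.rpow_lt_top_of_nonneg hθ (measure_ne_top μ _)

theorem measure_cyl_rpow_le_tsum (hθ0 : 0 < α / s) (hθ1 : α / s ≤ 1) {w : List (Fin m)}
    {D : Set (List (Fin m))} (h : Φ.cyl w ⊆ ⋃ u ∈ D, Φ.cyl u) :
    μ (Φ.cyl w) ^ (α / s) ≤ ∑' u : D, μ (Φ.cyl u) ^ (α / s) :=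
  calc μ (Φ.cyl w) ^ (α / s) ≤ (∑' u : D, μ (Φ.cyl u)) ^ (α / s) :=
        ENNReal.rpow_le_rpow ((measure_mono h).trans (measure_biUnion_le μ D.to_countable _))
          hθ0.le
    _ ≤ ∑' u : D, μ (Φ.cyl u) ^ (α / s) := ENNReal.rpow_tsum_le_tsum_rpow _ hθ0 hθ1

theorem hContent_union_add_inter_le (A B : Set (Pt d)) :
    Φ.hContent μ s α (A ∪ B) + Φ.hContent μ s α (A ∩ B) ≤
      Φ.hContent μ s α A + Φ.hContent μ s α B := by
  refine ENNReal.le_of_forall_pos_le_add fun ε hε hlt => ?_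
  have hε2 : (ε / 2 : ℝ≥0∞) ≠ 0 := by simpa using hε.ne'
  obtain ⟨CA, hA, hCA⟩ := exists_cover_tsum_lt
    (ENNReal.lt_add_right (ENNReal.add_lt_top.1 hlt).1.ne hε2)
  obtain ⟨CB, hB, hCB⟩ := exists_cover_tsum_lt
    (ENNReal.lt_add_right (ENNReal.add_lt_top.1 hlt).2.ne hε2)
  -- `Cu` covers `A ∪ B` by minimality, and `Ci` covers `A ∩ B` because a cube of `CA` and a cube
  -- of `CB` that meet are nested.
  set Cu := {u ∈ CA ∪ CB | ∀ w ∈ CA ∪ CB, w <+: u → w = u}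
  set Ci := ((CA ∪ CB) \ Cu) ∪ (CA ∩ CB)
  have hCu : ∀ w ∈ CA ∪ CB, Φ.cyl w ⊆ ⋃ v ∈ Cu, Φ.cyl v := fun w hw => by
    obtain ⟨v, hv, hvw, hmin⟩ := List.exists_prefix_minimal hw
    exact (Φ.cyl_subset_cyl_of_prefix hvw).trans (subset_biUnion_of_mem ⟨hv, hmin⟩)
  have hu : A ∪ B ⊆ ⋃ w ∈ Cu, Φ.cyl w :=
    union_subset (hA.trans (iUnion₂_subset fun w hw => hCu w (Or.inl hw)))
      (hB.trans (iUnion₂_subset fun w hw => hCu w (Or.inr hw)))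
  have hi : A ∩ B ⊆ ⋃ w ∈ Ci, Φ.cyl w := by
    rintro x ⟨hxA, hxB⟩
    obtain ⟨u, hu, hxu⟩ := mem_iUnion₂.1 (hA hxA)
    obtain ⟨v, hv, hxv⟩ := mem_iUnion₂.1 (hB hxB)
    by_cases huv : u = v
    · exact mem_biUnion (Or.inr ⟨hu, huv ▸ hv⟩) hxu
    rcases Φ.prefix_or_prefix_of_mem_cyl hxu hxv with h | h
    · exact mem_biUnion (Or.inl ⟨Or.inr hv, fun hmin => huv (hmin.2 u (Or.inl hu) h)⟩) hxv
    · exact mem_biUnion (Or.inl ⟨Or.inl hu, fun hmin => huv (hmin.2 v (Or.inr hv) h).symm⟩) hxu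
  calc Φ.hContent μ s α (A ∪ B) + Φ.hContent μ s α (A ∩ B)
      ≤ ∑' w : Cu, μ (Φ.cyl w) ^ (α / s) + ∑' w : Ci, μ (Φ.cyl w) ^ (α / s) :=
        add_le_add (hContent_le_tsum hu) (hContent_le_tsum hi)
    _ ≤ ∑' w : CA, μ (Φ.cyl w) ^ (α / s) + ∑' w : CB, μ (Φ.cyl w) ^ (α / s) :=
        tsum_add_tsum_le_of_subset_union (fun w => μ (Φ.cyl w) ^ (α / s)) fun _ hu => hu.1
    _ ≤ (Φ.hContent μ s α A + ε / 2) + (Φ.hContent μ s α B + ε / 2) :=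
        add_le_add hCA.le hCB.le
    _ = Φ.hContent μ s α A + Φ.hContent μ s α B + ε := by
        rw [add_add_add_comm, ENNReal.add_halves]

theorem exists_coarsening_of_cyl_subset (hθ0 : 0 < α / s) (hθ1 : α / s ≤ 1)
    {C : Set (List (Fin m))} {v : List (Fin m)} (hv : Φ.cyl v ⊆ ⋃ u ∈ C, Φ.cyl u) :
    ∃ C', prefixExtensions C ⊆ prefixExtensions C' ∧ v ∈ prefixExtensions C' ∧
      ∑' u : C', μ (Φ.cyl u) ^ (α / s) ≤ ∑' u : C, μ (Φ.cyl u) ^ (α / s) := by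
  by_cases hpre : v ∈ prefixExtensions C
  · exact ⟨C, subset_rfl, hpre, le_rfl⟩
  set X := {u ∈ C | v <+: u}
  refine ⟨insert v (C \ X), prefixExtensions_subset_prefixExtensions fun u hu => ?_,
    subset_prefixExtensions (mem_insert v _), ?_⟩
  · by_cases hvu : v <+: u
    · exact ⟨v, mem_insert v _, hvu⟩
    · exact subset_prefixExtensions (mem_insert_of_mem v ⟨hu, fun h => hvu h.2⟩)
  have hvX : μ (Φ.cyl v) ^ (α / s) ≤ ∑' u : X, μ (Φ.cyl u) ^ (α / s) := by
    refine measure_cyl_rpow_le_tsum hθ0 hθ1 fun x hx => ?_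
    obtain ⟨u, hu, hxu⟩ := mem_iUnion₂.1 (hv hx)
    rcases Φ.prefix_or_prefix_of_mem_cyl hxu hx with h | h
    · exact absurd ⟨u, hu, h⟩ hpre
    · exact mem_biUnion ⟨hu, h⟩ hxu
  calc ∑' u : ↥(insert v (C \ X)), μ (Φ.cyl u) ^ (α / s)
      ≤ μ (Φ.cyl v) ^ (α / s) + ∑' u : ↥(C \ X), μ (Φ.cyl u) ^ (α / s) := by
        rw [insert_eq]
        refine (ENNReal.tsum_union_le (fun u => μ (Φ.cyl u) ^ (α / s)) _ _).trans_eq ?_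
        rw [tsum_singleton v fun u => μ (Φ.cyl u) ^ (α / s)]
    _ ≤ ∑' u : X, μ (Φ.cyl u) ^ (α / s) + ∑' u : ↥(C \ X), μ (Φ.cyl u) ^ (α / s) := by
        gcongr
    _ = ∑' u : C, μ (Φ.cyl u) ^ (α / s) := by
        rw [← ENNReal.summable.tsum_union_disjoint (f := fun u => μ (Φ.cyl u) ^ (α / s))
          disjoint_sdiff_right ENNReal.summable,
          union_sdiff_cancel (sep_subset C _)]

theorem exists_coarsening_of_finset (hθ0 : 0 < α / s) (hθ1 : α / s ≤ 1)
    {C : Set (List (Fin m))} (t : Finset (List (Fin m)))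
    (ht : ∀ v ∈ t, Φ.cyl v ⊆ ⋃ u ∈ C, Φ.cyl u) :
    ∃ C', prefixExtensions C ⊆ prefixExtensions C' ∧ ↑t ⊆ prefixExtensions C' ∧
      ∑' u : C', μ (Φ.cyl u) ^ (α / s) ≤ ∑' u : C, μ (Φ.cyl u) ^ (α / s) := by
  classical
  induction t using Finset.induction_on with
  | empty => exact ⟨C, subset_rfl, by simp, le_rfl⟩
  | insert a t _ ih =>
    obtain ⟨C₁, hC₁, ht₁, hcost₁⟩ := ih fun v hv => ht v (Finset.mem_insert_of_mem hv)
    have ha : Φ.cyl a ⊆ ⋃ u ∈ C₁, Φ.cyl u :=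
      calc Φ.cyl a ⊆ ⋃ u ∈ C, Φ.cyl u := ht a (Finset.mem_insert_self a t)
        _ = ⋃ u ∈ prefixExtensions C, Φ.cyl u := (Φ.biUnion_cyl_prefixExtensions C).symm
        _ ⊆ ⋃ u ∈ prefixExtensions C₁, Φ.cyl u := biUnion_subset_biUnion_left hC₁
        _ = ⋃ u ∈ C₁, Φ.cyl u := Φ.biUnion_cyl_prefixExtensions C₁
    obtain ⟨C₂, hC₂, ha₂, hcost₂⟩ := exists_coarsening_of_cyl_subset hθ0 hθ1 ha
    refine ⟨C₂, hC₁.trans hC₂, ?_, hcost₂.trans hcost₁⟩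
    rw [Finset.coe_insert]
    exact insert_subset ha₂ (ht₁.trans hC₂)

theorem hContent_biUnion_accumulate_le [IsFiniteMeasure μ] (hθ : 0 ≤ α / s)
    {E : ℕ → Set (Pt d)} (hmono : Monotone E) (hE : ∀ j, E j ⊆ Φ.K) {C : ℕ → Set (List (Fin m))}
    (hEC : ∀ j, E j ⊆ ⋃ w ∈ C j, Φ.cyl w) {δ : ℕ → ℝ≥0∞}
    (hC : ∀ j, ∑' w : C j, μ (Φ.cyl w) ^ (α / s) ≤ Φ.hContent μ s α (E j) + δ j) (J : ℕ) :
    Φ.hContent μ s α (⋃ w ∈ accumulate C J, Φ.cyl w) ≤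
      Φ.hContent μ s α (E J) + ∑ i ∈ Finset.range (J + 1), δ i := by
  rw [show ⋃ w ∈ accumulate C J, Φ.cyl w = accumulate (fun j => ⋃ w ∈ C j, Φ.cyl w) J by
    simp only [accumulate_def, biUnion_iUnion]]
  exact apply_accumulate_le_add_sum hContent_mono hContent_union_add_inter_le hmono hEC
    (fun j => (hContent_lt_top hθ (hE j)).ne)
    (fun j => (hContent_le_tsum subset_rfl).trans (hC j)) J

theorem hContent_biUnion_cyl_le (hθ0 : 0 < α / s) (hθ1 : α / s ≤ 1) {D : Set (List (Fin m))}
    {c : ℝ≥0∞}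
    (hD : ∀ t : Finset (List (Fin m)), ↑t ⊆ D → Φ.hContent μ s α (⋃ w ∈ t, Φ.cyl w) ≤ c) :
    Φ.hContent μ s α (⋃ w ∈ D, Φ.cyl w) ≤ c := by
  classical
  refine ENNReal.le_of_forall_pos_le_add fun ε hε hc => ?_
  have hcover : ∀ t : Finset (List (Fin m)), ∃ C,
      (t.filter (· ∈ D) : Set (List (Fin m))) ⊆ prefixExtensions C ∧
        ∑' u : C, μ (Φ.cyl u) ^ (α / s) ≤ c + ε := by
    intro t
    obtain ⟨C, hC, hcost⟩ := exists_cover_tsum_lt <|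
      (hD (t.filter (· ∈ D)) fun w hw => (Finset.mem_filter.1 hw).2).trans_lt
        (ENNReal.lt_add_right hc.ne (ENNReal.coe_ne_zero.2 hε.ne'))
    obtain ⟨C', -, ht, hcost'⟩ := exists_coarsening_of_finset hθ0 hθ1 (t.filter (· ∈ D))
      fun v hv => (subset_biUnion_of_mem (u := fun w => Φ.cyl w) hv).trans hC
    exact ⟨C', ht, hcost'.trans hcost.le⟩
  choose Cs hCs hcost using hcover
  let 𝒰 := Ultrafilter.of (atTop : Filter (Finset (List (Fin m))))
  refine (hContent_le_tsum ?_).trans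
    (tsum_setOf_eventually_mem_le (l := 𝒰) (fun u => μ (Φ.cyl u) ^ (α / s)) hcost)
  refine (biUnion_subset_biUnion_left fun w hw => 𝒰.mem_prefixExtensions_setOf_eventually ?_).trans
    (Φ.biUnion_cyl_prefixExtensions _).subset
  filter_upwards [Ultrafilter.of_le atTop (eventually_ge_atTop {w})] with t ht
  exact hCs t (by simpa [hw] using ht)

end IFS

theorem hContent_tendsto_general (d m : ℕ) (Φ : IFS d m) (p : Fin m → ℝ≥0∞)
    (μ : Measure (Pt d)) (hμ : Φ.SelfSimilar p μ)
    (s : ℝ)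
    (α : ℝ) (hα : 0 < α) (hαs : α ≤ s)
    (E : ℕ → Set (Pt d)) (hmono : Monotone E) (hE : ∀ j, E j ⊆ Φ.K) :
    Tendsto (fun j => Φ.hContent μ s α (E j)) atTop
      (𝓝 (Φ.hContent μ s α (⋃ j, E j))) := by
  have hs : 0 < s := hα.trans_le hαs
  have hθ0 : 0 < α / s := div_pos hα hs
  have hθ1 : α / s ≤ 1 := (div_le_one hs).2 hαs
  have : IsProbabilityMeasure μ := hμ.2.2.1
  set H := Φ.hContent μ s α
  suffices hle : H (⋃ j, E j) ≤ ⨆ j, H (E j) by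
    rw [le_antisymm hle (iSup_le fun j => IFS.hContent_mono (subset_iUnion E j))]
    exact tendsto_atTop_iSup (IFS.hContent_mono.comp hmono)
  refine ENNReal.le_of_forall_pos_le_add fun ε hε _ => ?_
  obtain ⟨δ, hδ0, hδ⟩ := ENNReal.exists_pos_sum_of_countable (ENNReal.coe_ne_zero.2 hε.ne') ℕ
  have hfin (j : ℕ) : H (E j) ≠ ⊤ := (IFS.hContent_lt_top hθ0.le (hE j)).ne
  choose C hEC hC using fun j => IFS.exists_cover_tsum_lt
    (ENNReal.lt_add_right (hfin j) (ENNReal.coe_ne_zero.2 (hδ0 j).ne'))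
  have hacc (J : ℕ) : H (⋃ w ∈ accumulate C J, Φ.cyl w) ≤ (⨆ j, H (E j)) + ε :=
    (IFS.hContent_biUnion_accumulate_le hθ0.le hmono hE hEC (fun j => (hC j).le) J).trans <|
      add_le_add (le_iSup (fun j => H (E j)) J) ((ENNReal.sum_le_tsum _).trans hδ.le)
  calc H (⋃ j, E j) ≤ H (⋃ w ∈ ⋃ j, C j, Φ.cyl w) :=
        IFS.hContent_mono <| iUnion_subset fun j =>
          (hEC j).trans (biUnion_subset_biUnion_left (subset_iUnion C j))
    _ ≤ (⨆ j, H (E j)) + ε := IFS.hContent_biUnion_cyl_le hθ0 hθ1 fun t ht => by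
        obtain ⟨J, hJ⟩ := directed_accumulate.exists_mem_subset_of_finset_subset_biUnion
          (ht.trans iUnion_accumulate.ge)
        exact (IFS.hContent_mono (biUnion_subset_biUnion_left hJ)).trans (hacc J)

/-- Continuity from below of the Hausdorff content along increasing sequences of sets. -/
theorem hContent_tendsto (d m : ℕ) (Φ : IFS d m) (p : Fin m → ℝ≥0∞)
    (μ : Measure (Pt d)) (hμ : Φ.SelfSimilar p μ)
    (s : ℝ) (hs : 0 < s) (hdim : ∑ i, Φ.r i ^ s = 1)
    (α : ℝ) (hα : 0 < α) (hαs : α ≤ s)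
    (E : ℕ → Set (Pt d)) (hmono : Monotone E) (hE : ∀ j, E j ⊆ Φ.K) :
    Tendsto (fun j => Φ.hContent μ s α (E j)) atTop
      (𝓝 (Φ.hContent μ s α (⋃ j, E j))) :=
  hContent_tendsto_general d m Φ p μ hμ s α hα hαs E hmono hE
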